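/- arXiv:1912.07867 — 8 statements merged into one kernel-verified Lean document; each statement's English description precedes it below -/
import Mathlib

section
/- Let I ⊆ ℝ be an open interval, H ∈ ℝ a constant, and h : I → ℝ a twice continuously differentiable function with 4h(z) + h'(z)² > 0 for all z ∈ I. If h satisfies 8h(z) + 4h'(z)² − 4h(z)h''(z) = −2H·(4h(z) + h'(z)²)^{3/2} for all z ∈ I, then there exists a constant c ∈ ℝ such that 2h(z)/√(4h(z) + h'(z)²) = −H·h(z) + c for all z ∈ I. -/
/-!
With `Q = 4h + h'²`, the function `g = 2h/√Q + Hh` has derivative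
`g' = h' · ((8h + 4h'² − 4hh'')/(2 Q^{3/2}) + H)`, and the ODE says precisely that the bracket
vanishes. Hence `g` is constant on the interval, and its value is the constant `c`.
-/

open Real

lemma Real.rpow_three_halves_eq_mul_sqrt {x : ℝ} (hx : 0 ≤ x) : x ^ ((3 : ℝ) / 2) = x * √x := by
  rw [sqrt_eq_rpow, show (3 : ℝ) / 2 = 1 / 2 + 1 by norm_num, rpow_add_one' hx (by norm_num),
    mul_comm]

lemma hasDerivAt_delaunay_first_integral {h h₁ : ℝ → ℝ} {z h₂ : ℝ} (H : ℝ)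
    (hh : HasDerivAt h (h₁ z) z) (hh₁ : HasDerivAt h₁ h₂ z) (hQ : 0 < 4 * h z + h₁ z ^ 2) :
    HasDerivAt (fun x ↦ 2 * h x / √(4 * h x + h₁ x ^ 2) + H * h x)
      (h₁ z * ((8 * h z + 4 * h₁ z ^ 2 - 4 * h z * h₂)
        / (2 * (4 * h z + h₁ z ^ 2) ^ ((3 : ℝ) / 2)) + H)) z := by
  have hQ' : HasDerivAt (fun x ↦ 4 * h x + h₁ x ^ 2) (4 * h₁ z + 2 * h₁ z * h₂) z :=
    ((hh.const_mul 4).add (hh₁.pow 2)).congr_deriv (by norm_num)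
  have hs : 0 < √(4 * h z + h₁ z ^ 2) := sqrt_pos.mpr hQ
  have hs2 : √(4 * h z + h₁ z ^ 2) ^ 2 = 4 * h z + h₁ z ^ 2 := sq_sqrt hQ.le
  refine (((hh.const_mul 2).div (hQ'.sqrt hQ.ne') hs.ne').add (hh.const_mul H)).congr_deriv ?_
  rw [rpow_three_halves_eq_mul_sqrt hQ.le]
  generalize √(4 * h z + h₁ z ^ 2) = s at hs hs2 ⊢
  rw [← hs2]
  field_simp
  linear_combination 4 * h₁ z * hs2

/-- First integral of the Delaunay ODE: if `h` is C² on an open interval with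
`4h + h'² > 0` and satisfies `8h + 4h'² − 4hh'' = −2H(4h + h'²)^{3/2}`, then there
is a constant `c` with `2h/√(4h + h'²) = −Hh + c`. -/
theorem stmt_2 (a b H : ℝ) (h : ℝ → ℝ)
    (hC : ContDiffOn ℝ 2 h (Set.Ioo a b))
    (hpos : ∀ z ∈ Set.Ioo a b, 4 * h z + (deriv h z) ^ 2 > 0)
    (hode : ∀ z ∈ Set.Ioo a b,
      8 * h z + 4 * (deriv h z) ^ 2 - 4 * h z * deriv (deriv h) z
        = -2 * H * (4 * h z + (deriv h z) ^ 2) ^ ((3 : ℝ) / 2)) :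
    ∃ c : ℝ, ∀ z ∈ Set.Ioo a b,
      2 * h z / Real.sqrt (4 * h z + (deriv h z) ^ 2) = -H * h z + c := by
  set g : ℝ → ℝ := fun z ↦ 2 * h z / √(4 * h z + deriv h z ^ 2) + H * h z
  have hC' : ContDiffOn ℝ 1 (deriv h) (Set.Ioo a b) :=
    hC.deriv_of_isOpen isOpen_Ioo (by norm_num)
  have hg' : ∀ z ∈ Set.Ioo a b, HasDerivAt g 0 z := by
    intro z hz
    have hnhds := isOpen_Ioo.mem_nhds hz
    have hd := hasDerivAt_delaunay_first_integral H
      ((hC.contDiffAt hnhds).differentiableAt (by norm_num)).hasDerivAt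
      ((hC'.contDiffAt hnhds).differentiableAt one_ne_zero).hasDerivAt (hpos z hz)
    have hQ32 : (4 * h z + deriv h z ^ 2) ^ ((3 : ℝ) / 2) ≠ 0 := (rpow_pos_of_pos (hpos z hz) _).ne'
    rw [hode z hz, mul_div_mul_right _ _ hQ32] at hd
    exact hd.congr_deriv (by ring)
  obtain ⟨c, hc⟩ := isOpen_Ioo.exists_is_const_of_deriv_eq_zero isPreconnected_Ioo
    (fun z hz ↦ (hg' z hz).differentiableAt.differentiableWithinAt) (fun z hz ↦ (hg' z hz).deriv)
  exact ⟨c, fun z hz ↦ by linarith [hc z hz]⟩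
end

section
/- Let I ⊆ ℝ be an open interval, a, b ∈ ℝ with a ≠ 0, and let f : I → ℝ be a continuously differentiable function with f'(x) ≠ 0 for all x ∈ I satisfying f'(x)² = a·f(x) + b on I. Then there exists a constant c ∈ ℝ such that f(x) = (a·x + c)²/(4a) − b/a for all x ∈ I. -/
/-!
Since `f' ≠ 0`, Darboux's theorem gives `f'` a constant sign `σ = ±1` on the interval. Then
`u = √(a f + b) = |f'| = σ f'` has derivative `a f' / (2u) = σ a / 2`, so `u` is affine with
slope `σ a / 2`, and `a f + b = u²` is the claimed square.
-/

open Set Real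

lemma Convex.exists_abs_deriv_eq_mul {s : Set ℝ} (hs : Convex ℝ s) {f : ℝ → ℝ}
    (hf : ∀ x ∈ s, deriv f x ≠ 0) :
    ∃ σ : ℝ, σ ^ 2 = 1 ∧ ∀ x ∈ s, |deriv f x| = σ * deriv f x := by
  -- `deriv f x ≠ 0` forces differentiability at `x`, as `deriv` is `0` elsewhere.
  have hderiv : ∀ x ∈ s, HasDerivWithinAt f (deriv f x) s x := fun x hx =>
    (differentiableAt_of_deriv_ne_zero (hf x hx)).hasDerivAt.hasDerivWithinAt
  rcases hasDerivWithinAt_forall_lt_or_forall_gt_of_forall_ne hs hderiv hf with hneg | hpos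
  · exact ⟨-1, by norm_num, fun x hx => by rw [abs_of_neg (hneg x hx)]; ring⟩
  · exact ⟨1, by norm_num, fun x hx => by rw [abs_of_pos (hpos x hx), one_mul]⟩

lemma IsOpen.exists_eq_mul_add_of_hasDerivAt {s : Set ℝ} (hs : IsOpen s)
    (hs' : IsPreconnected s) {g : ℝ → ℝ} {m : ℝ} (hg : ∀ x ∈ s, HasDerivAt g m x) :
    ∃ k, ∀ x ∈ s, g x = m * x + k :=
  hs.exists_eq_add_of_deriv_eq hs' (fun x hx => (hg x hx).differentiableAt.differentiableWithinAt)
    (differentiable_id.const_mul m).differentiableOn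
    (fun x hx => by simp [(hg x hx).deriv])

lemma hasDerivAt_sqrt_of_deriv_sq_eq {f : ℝ → ℝ} {a b σ x : ℝ}
    (hode : deriv f x ^ 2 = a * f x + b) (hne : deriv f x ≠ 0) (hσ : σ ^ 2 = 1)
    (habs : |deriv f x| = σ * deriv f x) :
    HasDerivAt (fun y => √(a * f y + b)) (σ * a / 2) x := by
  have hsqrt : √(a * f x + b) = σ * deriv f x := by rw [← hode, sqrt_sq_eq_abs, habs]
  have hpos : 0 < a * f x + b := by rw [← hode]; positivity
  have hσ0 : σ ≠ 0 := by rintro rfl; norm_num at hσ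
  convert (((differentiableAt_of_deriv_ne_zero hne).hasDerivAt.const_mul a).add_const b).sqrt
    hpos.ne' using 1
  rw [hsqrt]
  field_simp
  linear_combination a * hσ

theorem stmt_6_general (α β a b : ℝ) (ha : a ≠ 0) (f : ℝ → ℝ)
    (hne : ∀ x ∈ Set.Ioo α β, deriv f x ≠ 0)
    (hode : ∀ x ∈ Set.Ioo α β, (deriv f x) ^ 2 = a * f x + b) :
    ∃ c : ℝ, ∀ x ∈ Set.Ioo α β, f x = (a * x + c) ^ 2 / (4 * a) - b / a := by
  obtain ⟨σ, hσ, habs⟩ := (convex_Ioo α β).exists_abs_deriv_eq_mul hne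
  obtain ⟨k, hk⟩ := isOpen_Ioo.exists_eq_mul_add_of_hasDerivAt isPreconnected_Ioo
    fun x hx => hasDerivAt_sqrt_of_deriv_sq_eq (hode x hx) (hne x hx) hσ (habs x hx)
  refine ⟨2 * σ * k, fun x hx => ?_⟩
  have hsq : a * f x + b = (σ * a / 2 * x + k) ^ 2 := by
    rw [← hk x hx, sq_sqrt (hode x hx ▸ sq_nonneg _)]
  field_simp
  linear_combination 4 * hsq + ((a * x) ^ 2 - 4 * k ^ 2) * hσ

/-- If `f` is C¹ on an open interval with `f' ≠ 0` and satisfies `f'² = af + b`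
with `a ≠ 0`, then `f(x) = (ax + c)²/(4a) − b/a` for some constant `c`. -/
theorem stmt_6 (α β a b : ℝ) (ha : a ≠ 0) (f : ℝ → ℝ)
    (hf : ContDiffOn ℝ 1 f (Set.Ioo α β))
    (hne : ∀ x ∈ Set.Ioo α β, deriv f x ≠ 0)
    (hode : ∀ x ∈ Set.Ioo α β, (deriv f x) ^ 2 = a * f x + b) :
    ∃ c : ℝ, ∀ x ∈ Set.Ioo α β, f x = (a * x + c) ^ 2 / (4 * a) - b / a :=
  stmt_6_general α β a b ha f hne hode
end

section
/- Let X, Y, Z be twice continuously differentiable functions on open intervals I, J, K ⊆ ℝ, H ∈ ℝ, and suppose X(u)+Y(v)+Z(w) > 0 and (X(u)+Y(v))Z'(w) + (X'(u)+Y'(v))Z(w) + X'(u)Y(v) + X(u)Y'(v) = −4H(X(u)+Y(v)+Z(w))^{3/2} hold for all u ∈ I, v ∈ J, w ∈ K with u+v+w = 0. Then for all such triples (u,v,w): (X'(u)−Y'(v))Z'(w) + (X''(u)−Y''(v))Z(w) + X''(u)Y(v) − X(u)Y''(v) = −6H(X'(u)−Y'(v))(X(u)+Y(v)+Z(w))^{1/2}.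 -/
/-!
The line `t ↦ (u + t, v - t, w)` stays on the constraint set `u + v + w = 0`, so the hypothesis
is an identity between two functions of `t` near `t = 0`. Differentiating both sides at `t = 0`
by the product and chain rules gives the claimed identity; since `3/2 ≥ 1`, the power
`s ↦ s ^ (3/2)` is differentiable everywhere with derivative `(3/2) s ^ (1/2)`.
-/

open Filter Topology

section Regularity

variable {𝕜 F : Type*} [NontriviallyNormedField 𝕜] [NormedAddCommGroup F] [NormedSpace 𝕜 F]
  {f : 𝕜 → F} {s : Set 𝕜} {x : 𝕜}

theorem ContDiffOn.hasDerivAt_and_hasDerivAt_deriv (hf : ContDiffOn 𝕜 2 f s) (hs : IsOpen s)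
    (hx : x ∈ s) : HasDerivAt f (deriv f x) x ∧ HasDerivAt (deriv f) (deriv (deriv f) x) x := by
  have hf' : ContDiffOn 𝕜 1 (deriv f) s := hf.deriv_of_isOpen hs (by norm_num)
  exact ⟨((hf.contDiffAt (hs.mem_nhds hx)).differentiableAt two_ne_zero).hasDerivAt,
    ((hf'.contDiffAt (hs.mem_nhds hx)).differentiableAt one_ne_zero).hasDerivAt⟩

end Regularity

section Antidiagonal

variable {X X' Y Y' : ℝ → ℝ} {u v x' x'' y' y'' : ℝ}

theorem HasDerivAt.comp_add_zero (hX : HasDerivAt X x' u) :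
    HasDerivAt (fun t => X (u + t)) x' 0 :=
  HasDerivAt.comp_const_add u 0 (by rwa [add_zero])

theorem HasDerivAt.comp_sub_zero (hY : HasDerivAt Y y' v) :
    HasDerivAt (fun t => Y (v - t)) (-y') 0 :=
  HasDerivAt.comp_const_sub v 0 (by rwa [sub_zero])

theorem eventually_add_mem_and_sub_mem {s t : Set ℝ} (hs : s ∈ 𝓝 u) (ht : t ∈ 𝓝 v) :
    ∀ᶠ r in 𝓝 0, u + r ∈ s ∧ v - r ∈ t :=
  (((continuous_const.add continuous_id).tendsto' 0 u (add_zero u)).eventually_mem hs).and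
    (((continuous_const.sub continuous_id).tendsto' 0 v (sub_zero v)).eventually_mem ht)

theorem hasDerivAt_cmcLhs_antidiagonal (z z' : ℝ) (hX : HasDerivAt X (X' u) u)
    (hX' : HasDerivAt X' x'' u) (hY : HasDerivAt Y (Y' v) v) (hY' : HasDerivAt Y' y'' v) :
    HasDerivAt (fun t => (X (u + t) + Y (v - t)) * z' + (X' (u + t) + Y' (v - t)) * z
        + X' (u + t) * Y (v - t) + X (u + t) * Y' (v - t))
      ((X' u - Y' v) * z' + (x'' - y'') * z + x'' * Y v - X u * y'') 0 := by
  have h := ((((hX.comp_add_zero.add hY.comp_sub_zero).mul_const z').add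
    ((hX'.comp_add_zero.add hY'.comp_sub_zero).mul_const z)).add
    (hX'.comp_add_zero.mul hY.comp_sub_zero)).add (hX.comp_add_zero.mul hY'.comp_sub_zero)
  simp only [add_zero, sub_zero] at h
  exact h.congr_deriv (by ring)

end Antidiagonal

theorem HasDerivAt.rpow_three_halves {g : ℝ → ℝ} {g' x : ℝ} (hg : HasDerivAt g g' x) :
    HasDerivAt (fun t => g t ^ ((3 : ℝ) / 2)) (3 / 2 * g' * g x ^ ((1 : ℝ) / 2)) x :=
  (hg.rpow_const (Or.inr (by norm_num))).congr_deriv (by rw [show (3 : ℝ) / 2 - 1 = 1 / 2 by norm_num]; ring)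

theorem stmt_9_general (aI bI aJ bJ aK bK H : ℝ) (X Y Z : ℝ → ℝ)
    (hX : ContDiffOn ℝ 2 X (Set.Ioo aI bI))
    (hY : ContDiffOn ℝ 2 Y (Set.Ioo aJ bJ))
    (heq : ∀ u ∈ Set.Ioo aI bI, ∀ v ∈ Set.Ioo aJ bJ, ∀ w ∈ Set.Ioo aK bK,
      u + v + w = 0 →
      (X u + Y v) * deriv Z w + (deriv X u + deriv Y v) * Z w
          + deriv X u * Y v + X u * deriv Y v
        = -4 * H * (X u + Y v + Z w) ^ ((3 : ℝ) / 2)) :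
    ∀ u ∈ Set.Ioo aI bI, ∀ v ∈ Set.Ioo aJ bJ, ∀ w ∈ Set.Ioo aK bK,
      u + v + w = 0 →
      (deriv X u - deriv Y v) * deriv Z w
          + (deriv (deriv X) u - deriv (deriv Y) v) * Z w
          + deriv (deriv X) u * Y v - X u * deriv (deriv Y) v
        = -6 * H * (deriv X u - deriv Y v) * (X u + Y v + Z w) ^ ((1 : ℝ) / 2) := by
  intro u hu v hv w hw hsum
  obtain ⟨hX₁, hX₂⟩ := hX.hasDerivAt_and_hasDerivAt_deriv isOpen_Ioo hu
  obtain ⟨hY₁, hY₂⟩ := hY.hasDerivAt_and_hasDerivAt_deriv isOpen_Ioo hv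
  have hrhs := (((hX₁.comp_add_zero.add hY₁.comp_sub_zero).add_const (Z w)).rpow_three_halves
    ).const_mul (-4 * H)
  refine (hasDerivAt_cmcLhs_antidiagonal (Z w) (deriv Z w) hX₁ hX₂ hY₁ hY₂).unique
    ((hrhs.congr_of_eventuallyEq ?_).congr_deriv ?_)
  · filter_upwards [eventually_add_mem_and_sub_mem (isOpen_Ioo.mem_nhds hu)
      (isOpen_Ioo.mem_nhds hv)] with t ⟨htu, htv⟩
    exact heq _ htu _ htv w hw (by linarith)
  · simp only [Pi.add_apply, add_zero, sub_zero]
    ring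

/-- Differentiating the transformed CMC equation along the constraint `u + v + w = 0`
yields `(X'−Y')Z' + (X''−Y'')Z + X''Y − XY'' = −6H(X'−Y')(X+Y+Z)^{1/2}`. -/
theorem stmt_9 (aI bI aJ bJ aK bK H : ℝ) (X Y Z : ℝ → ℝ)
    (hX : ContDiffOn ℝ 2 X (Set.Ioo aI bI))
    (hY : ContDiffOn ℝ 2 Y (Set.Ioo aJ bJ))
    (hZ : ContDiffOn ℝ 2 Z (Set.Ioo aK bK))
    (hpos : ∀ u ∈ Set.Ioo aI bI, ∀ v ∈ Set.Ioo aJ bJ, ∀ w ∈ Set.Ioo aK bK,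
      u + v + w = 0 → X u + Y v + Z w > 0)
    (heq : ∀ u ∈ Set.Ioo aI bI, ∀ v ∈ Set.Ioo aJ bJ, ∀ w ∈ Set.Ioo aK bK,
      u + v + w = 0 →
      (X u + Y v) * deriv Z w + (deriv X u + deriv Y v) * Z w
          + deriv X u * Y v + X u * deriv Y v
        = -4 * H * (X u + Y v + Z w) ^ ((3 : ℝ) / 2)) :
    ∀ u ∈ Set.Ioo aI bI, ∀ v ∈ Set.Ioo aJ bJ, ∀ w ∈ Set.Ioo aK bK,
      u + v + w = 0 →
      (deriv X u - deriv Y v) * deriv Z w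
          + (deriv (deriv X) u - deriv (deriv Y) v) * Z w
          + deriv (deriv X) u * Y v - X u * deriv (deriv Y) v
        = -6 * H * (deriv X u - deriv Y v) * (X u + Y v + Z w) ^ ((1 : ℝ) / 2) :=
  stmt_9_general aI bI aJ bJ aK bK H X Y Z hX hY heq
end

section
/- Let X, Y, Z be twice continuously differentiable functions on open intervals I, J, K ⊆ ℝ, H ∈ ℝ, and suppose X(u)+Y(v)+Z(w) > 0 and (X(u)+Y(v))Z'(w) + (X'(u)+Y'(v))Z(w) + X'(u)Y(v) + X(u)Y'(v) = −4H(X(u)+Y(v)+Z(w))^{3/2} hold for all u ∈ I, v ∈ J, w ∈ K with u+v+w = 0, and that X(u)+Y(v) ≠ 0 on this set. Define P(u,v) = X'(u)² − Y'(v)² − (X(u)+Y(v))(X''(u)−Y''(v)) and Q(u,v) = (X'(u)−Y'(v))(X'(u)Y(v)+X(u)Y'(v)) − (X(u)+Y(v))(X''(u)Y(v)−X(u)Y''(v)). Then for all u ∈ I, v ∈ J, w ∈ K with u+v+w = 0: P(u,v)·Z(w) + Q(u,v) = 2H(X'(u)−Y'(v))(X(u)+Y(v)−2Z(w))·(X(u)+Y(v)+Z(w))^{1/2}.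 -/
/-!
Freeze `v` and differentiate the CMC equation in `u` along `w = -u - v`, then freeze `u` and
differentiate in `v`. The two resulting identities involve `Z''` with the same coefficient
`-(X + Y)`, so their difference contains only `Z` and `Z'`; multiplying it by `X + Y` and
subtracting `(X' - Y')` times the original equation cancels `Z'` and leaves `PZ + Q`.
-/

section

variable {𝕜 F : Type*} [NontriviallyNormedField 𝕜] [NormedAddCommGroup F] [NormedSpace 𝕜 F]
  {n : WithTop ℕ∞} {f : 𝕜 → F} {s : Set 𝕜} {x : 𝕜}

theorem ContDiffOn.hasDerivAt_deriv (hf : ContDiffOn 𝕜 n f s) (hs : IsOpen s) (hn : n ≠ 0)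
    (hx : x ∈ s) : HasDerivAt f (deriv f x) x :=
  ((hf.contDiffAt (hs.mem_nhds hx)).differentiableAt hn).hasDerivAt

theorem ContDiffOn.hasDerivAt_deriv_deriv (hf : ContDiffOn 𝕜 2 f s) (hs : IsOpen s)
    (hx : x ∈ s) : HasDerivAt (deriv f) (deriv (deriv f) x) x :=
  (hf.deriv_of_isOpen (m := 1) hs (by norm_num)).hasDerivAt_deriv hs one_ne_zero hx

end

/-- `c` is the frozen variable; `A`, `A'` are the value and derivative of its function there. -/
theorem cmc_equation_deriv_along_constraint {I K : Set ℝ} {H A A' c u₀ : ℝ}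
    {X Z : ℝ → ℝ}
    (hI : IsOpen I) (hK : IsOpen K) (hX : ContDiffOn ℝ 2 X I) (hZ : ContDiffOn ℝ 2 Z K)
    (hu₀ : u₀ ∈ I) (hw₀ : -u₀ - c ∈ K) (hpos : 0 < X u₀ + A + Z (-u₀ - c))
    (heq : ∀ u ∈ I, -u - c ∈ K →
      (X u + A) * deriv Z (-u - c) + (deriv X u + A') * Z (-u - c) + deriv X u * A + X u * A'
        = -4 * H * (X u + A + Z (-u - c)) ^ ((3 : ℝ) / 2)) :
    deriv X u₀ * deriv Z (-u₀ - c) - (X u₀ + A) * deriv (deriv Z) (-u₀ - c)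
        + deriv (deriv X) u₀ * Z (-u₀ - c) - (deriv X u₀ + A') * deriv Z (-u₀ - c)
        + deriv (deriv X) u₀ * A + deriv X u₀ * A'
      = -6 * H * (X u₀ + A + Z (-u₀ - c)) ^ ((1 : ℝ) / 2)
          * (deriv X u₀ - deriv Z (-u₀ - c)) := by
  have hw : HasDerivAt (fun u : ℝ => -u - c) (-1) u₀ := by
    simpa using (hasDerivAt_neg u₀).sub_const c
  have hX₁ := hX.hasDerivAt_deriv hI two_ne_zero hu₀
  have hX₂ := hX.hasDerivAt_deriv_deriv hI hu₀
  have hZ₁ := (hZ.hasDerivAt_deriv hK two_ne_zero hw₀).comp u₀ hw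
  have hZ₂ := (hZ.hasDerivAt_deriv_deriv hK hw₀).comp u₀ hw
  have hlhs := ((((hX₁.add_const A).mul hZ₂).add ((hX₂.add_const A').mul hZ₁)).add
    (hX₂.mul_const A)).add (hX₁.mul_const A')
  have hrhs := (((hX₁.add_const A).add hZ₁).rpow_const
    (p := (3 : ℝ) / 2) (Or.inl hpos.ne')).const_mul (-4 * H)
  have hev : ∀ᶠ u in nhds u₀, u ∈ I ∧ -u - c ∈ K :=
    Filter.Eventually.and (hI.mem_nhds hu₀)
      (hw.continuousAt.preimage_mem_nhds (hK.mem_nhds hw₀))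
  have huniq := hlhs.unique (hrhs.congr_of_eventuallyEq
    (hev.mono fun u hu => heq u hu.1 hu.2))
  rw [show (3 : ℝ) / 2 - 1 = 1 / 2 by norm_num] at huniq
  simp only [Function.comp_def] at huniq
  linear_combination huniq

theorem stmt_10_general (aI bI aJ bJ aK bK H : ℝ) (X Y Z : ℝ → ℝ) (P Q : ℝ → ℝ → ℝ)
    (hX : ContDiffOn ℝ 2 X (Set.Ioo aI bI))
    (hY : ContDiffOn ℝ 2 Y (Set.Ioo aJ bJ))
    (hZ : ContDiffOn ℝ 2 Z (Set.Ioo aK bK))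
    (hpos : ∀ u ∈ Set.Ioo aI bI, ∀ v ∈ Set.Ioo aJ bJ, ∀ w ∈ Set.Ioo aK bK,
      u + v + w = 0 → X u + Y v + Z w > 0)
    (heq : ∀ u ∈ Set.Ioo aI bI, ∀ v ∈ Set.Ioo aJ bJ, ∀ w ∈ Set.Ioo aK bK,
      u + v + w = 0 →
      (X u + Y v) * deriv Z w + (deriv X u + deriv Y v) * Z w
          + deriv X u * Y v + X u * deriv Y v
        = -4 * H * (X u + Y v + Z w) ^ ((3 : ℝ) / 2))
    (hP : ∀ u ∈ Set.Ioo aI bI, ∀ v ∈ Set.Ioo aJ bJ,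
      P u v = (deriv X u) ^ 2 - (deriv Y v) ^ 2
        - (X u + Y v) * (deriv (deriv X) u - deriv (deriv Y) v))
    (hQ : ∀ u ∈ Set.Ioo aI bI, ∀ v ∈ Set.Ioo aJ bJ,
      Q u v = (deriv X u - deriv Y v) * (deriv X u * Y v + X u * deriv Y v)
        - (X u + Y v) * (deriv (deriv X) u * Y v - X u * deriv (deriv Y) v)) :
    ∀ u ∈ Set.Ioo aI bI, ∀ v ∈ Set.Ioo aJ bJ, ∀ w ∈ Set.Ioo aK bK,
      u + v + w = 0 →
      P u v * Z w + Q u v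
        = 2 * H * (deriv X u - deriv Y v) * (X u + Y v - 2 * Z w)
          * (X u + Y v + Z w) ^ ((1 : ℝ) / 2) := by
  intro u hu v hv w hw huvw
  obtain rfl : w = -u - v := by linarith
  have hS := hpos u hu v hv _ hw (by ring)
  have hvu : -v - u = -u - v := by ring
  have hderiv_u := cmc_equation_deriv_along_constraint isOpen_Ioo isOpen_Ioo hX hZ hu hw hS
    fun u' hu' hw' => heq u' hu' v hv _ hw' (by ring)
  have hderiv_v := cmc_equation_deriv_along_constraint (H := H) (A := X u) (A' := deriv X u)
    isOpen_Ioo isOpen_Ioo hY hZ hv (hvu ▸ hw) (by rw [hvu]; linarith) fun v' hv' hw' => by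
      rw [add_comm (Y v') (X u)]
      linear_combination heq u hu v' hv' _ hw' (by ring)
  rw [hvu, add_comm (Y v) (X u)] at hderiv_v
  have hcmc := heq u hu v hv _ hw (by ring)
  rw [show (3 : ℝ) / 2 = 1 + 1 / 2 by norm_num, Real.rpow_add hS, Real.rpow_one] at hcmc
  rw [hP u hu v hv, hQ u hu v hv]
  linear_combination (-(X u + Y v)) * (hderiv_u - hderiv_v) + (deriv X u - deriv Y v) * hcmc

/-- Eliminating `Z'` between the transformed CMC equation and its derivative along the
constraint `u + v + w = 0` gives `PZ + Q = 2H(X'−Y')(X+Y−2Z)(X+Y+Z)^{1/2}`. -/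
theorem stmt_10 (aI bI aJ bJ aK bK H : ℝ) (X Y Z : ℝ → ℝ) (P Q : ℝ → ℝ → ℝ)
    (hX : ContDiffOn ℝ 2 X (Set.Ioo aI bI))
    (hY : ContDiffOn ℝ 2 Y (Set.Ioo aJ bJ))
    (hZ : ContDiffOn ℝ 2 Z (Set.Ioo aK bK))
    (hpos : ∀ u ∈ Set.Ioo aI bI, ∀ v ∈ Set.Ioo aJ bJ, ∀ w ∈ Set.Ioo aK bK,
      u + v + w = 0 → X u + Y v + Z w > 0)
    (heq : ∀ u ∈ Set.Ioo aI bI, ∀ v ∈ Set.Ioo aJ bJ, ∀ w ∈ Set.Ioo aK bK,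
      u + v + w = 0 →
      (X u + Y v) * deriv Z w + (deriv X u + deriv Y v) * Z w
          + deriv X u * Y v + X u * deriv Y v
        = -4 * H * (X u + Y v + Z w) ^ ((3 : ℝ) / 2))
    (hne : ∀ u ∈ Set.Ioo aI bI, ∀ v ∈ Set.Ioo aJ bJ, ∀ w ∈ Set.Ioo aK bK,
      u + v + w = 0 → X u + Y v ≠ 0)
    (hP : ∀ u ∈ Set.Ioo aI bI, ∀ v ∈ Set.Ioo aJ bJ,
      P u v = (deriv X u) ^ 2 - (deriv Y v) ^ 2
        - (X u + Y v) * (deriv (deriv X) u - deriv (deriv Y) v))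
    (hQ : ∀ u ∈ Set.Ioo aI bI, ∀ v ∈ Set.Ioo aJ bJ,
      Q u v = (deriv X u - deriv Y v) * (deriv X u * Y v + X u * deriv Y v)
        - (X u + Y v) * (deriv (deriv X) u * Y v - X u * deriv (deriv Y) v)) :
    ∀ u ∈ Set.Ioo aI bI, ∀ v ∈ Set.Ioo aJ bJ, ∀ w ∈ Set.Ioo aK bK,
      u + v + w = 0 →
      P u v * Z w + Q u v
        = 2 * H * (deriv X u - deriv Y v) * (X u + Y v - 2 * Z w)
          * (X u + Y v + Z w) ^ ((1 : ℝ) / 2) :=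
  stmt_10_general aI bI aJ bJ aK bK H X Y Z P Q hX hY hZ hpos heq hP hQ
end

section
/- Let X, Y, Z be twice continuously differentiable functions on open intervals I, J, K ⊆ ℝ, H ∈ ℝ, and suppose X(u)+Y(v)+Z(w) > 0 and (X(u)+Y(v))Z'(w) + (X'(u)+Y'(v))Z(w) + X'(u)Y(v) + X(u)Y'(v) = −4H(X(u)+Y(v)+Z(w))^{3/2} hold for all u ∈ I, v ∈ J, w ∈ K with u+v+w = 0, and that X(u)+Y(v) ≠ 0 on this set. Define P(u,v) = X'(u)² − Y'(v)² − (X(u)+Y(v))(X''(u)−Y''(v)) and Q(u,v) = (X'(u)−Y'(v))(X'(u)Y(v)+X(u)Y'(v)) − (X(u)+Y(v))(X''(u)Y(v)−X(u)Y''(v)), and set L = 16H²(X'−Y')², M = −P², N = −12H²(X+Y)²(X'−Y')² − 2PQ, R = 4H²(X+Y)³(X'−Y')² − Q² (all evaluated at (u,v)). Then for all u ∈ I, v ∈ J, w ∈ K with u+v+w = 0: L·Z(w)³ + M·Z(w)² + N·Z(w) + R = 0. -/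
/-!
Along the plane `u + v + w = 0` the constant mean curvature identity can be differentiated in
`u` and in `v`, with `w = -u - v`; by the symmetry `(X, u) ↔ (Y, v)` one computation serves for
both.  Subtracting the two derivatives, weighted
by `X + Y`, eliminates `Z''`, and `Z'` is then eliminated with the identity itself; what is left is
`P Z + Q = 2H (X' - Y') (X + Y - 2Z) √(X + Y + Z)`.  Squaring it and using `√S² = S` gives the
cubic in `Z`.
-/

open Filter Topology

theorem hasDerivAt_of_contDiffOn {f : ℝ → ℝ} {s : Set ℝ} {n : WithTop ℕ∞}
    (hf : ContDiffOn ℝ n f s) (hs : IsOpen s) (hn : n ≠ 0) {x : ℝ} (hx : x ∈ s) :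
    HasDerivAt f (deriv f x) x :=
  ((hf.contDiffAt (hs.mem_nhds hx)).differentiableAt hn).hasDerivAt

theorem Real.rpow_three_halves {x : ℝ} (hx : 0 ≤ x) : x ^ ((3 : ℝ) / 2) = √x ^ 3 := by
  rw [Real.sqrt_eq_rpow, ← Real.rpow_natCast, ← Real.rpow_mul hx]
  norm_num

/-- Differentiating the constant mean curvature identity in `u` along `u + w = c`, the
`Y`-terms `b = Y v`, `b' = Y' v` being held fixed. -/
theorem cmc_identity_deriv {X Z : ℝ → ℝ} {I K : Set ℝ} (hI : IsOpen I) (hK : IsOpen K)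
    (hX : ContDiffOn ℝ 2 X I) (hZ : ContDiffOn ℝ 2 Z K) {b b' c H : ℝ}
    (heq : ∀ u ∈ I, ∀ w ∈ K, u + w = c →
      (X u + b) * deriv Z w + (deriv X u + b') * Z w + deriv X u * b + X u * b'
        = -4 * H * (X u + b + Z w) ^ ((3 : ℝ) / 2))
    {u w : ℝ} (hu : u ∈ I) (hw : w ∈ K) (huw : u + w = c) :
    deriv X u * deriv Z w - (X u + b) * deriv (deriv Z) w + deriv (deriv X) u * Z w
        - (deriv X u + b') * deriv Z w + deriv (deriv X) u * b + deriv X u * b'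
      = -6 * H * √(X u + b + Z w) * (deriv X u - deriv Z w) := by
  have hcw : c - u = w := by linarith
  have hX1 := hasDerivAt_of_contDiffOn hX hI two_ne_zero hu
  have hX2 := hasDerivAt_of_contDiffOn (hX.deriv_of_isOpen hI le_rfl) hI one_ne_zero hu
  have hZ1 : HasDerivAt (fun t => Z (c - t)) (-deriv Z w) u := by
    refine HasDerivAt.comp_const_sub c u ?_
    rw [hcw]
    exact hasDerivAt_of_contDiffOn hZ hK two_ne_zero hw
  have hZ2 : HasDerivAt (fun t => deriv Z (c - t)) (-deriv (deriv Z) w) u := by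
    refine HasDerivAt.comp_const_sub c u ?_
    rw [hcw]
    exact hasDerivAt_of_contDiffOn (hZ.deriv_of_isOpen hK le_rfl) hK one_ne_zero hw
  have hlhs := ((((hX1.add_const b).mul hZ2).add ((hX2.add_const b').mul hZ1)).add
    (hX2.mul_const b)).add (hX1.mul_const b')
  have hrhs := (((hX1.add_const b).add hZ1).rpow_const (p := (3 : ℝ) / 2)
    (Or.inr (by norm_num))).const_mul (-4 * H)
  have hnear : ∀ᶠ t in 𝓝 u, t ∈ I ∧ c - t ∈ K := by
    refine (hI.eventually_mem hu).and ?_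
    have hcont : ContinuousAt (fun t : ℝ => c - t) u := by fun_prop
    exact hcont.eventually_mem (hK.mem_nhds (hcw ▸ hw))
  have hderiv := hlhs.unique <| hrhs.congr_of_eventuallyEq <|
    hnear.mono fun t ht => heq t ht.1 (c - t) ht.2 (by ring)
  rw [Real.sqrt_eq_rpow]
  norm_num [hcw] at hderiv
  linear_combination hderiv

section Algebra

variable {R : Type*} [CommRing R]

/-- `h₁ - h₂` (weighted by `x + y`) eliminates `z''`, and `h₀` then eliminates `z'`. -/
theorem linear_relation_of_cmc_derivs {x x' x'' y y' y'' z z' z'' s H : R}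
    (h₀ : (x + y) * z' + (x' + y') * z + x' * y + x * y' = -4 * H * s ^ 3)
    (h₁ : x' * z' - (x + y) * z'' + x'' * z - (x' + y') * z' + x'' * y + x' * y'
      = -6 * H * s * (x' - z'))
    (h₂ : y' * z' - (y + x) * z'' + y'' * z - (y' + x') * z' + y'' * x + y' * x'
      = -6 * H * s * (y' - z'))
    (hs : s ^ 2 = x + y + z) :
    (x' ^ 2 - y' ^ 2 - (x + y) * (x'' - y'')) * z
        + ((x' - y') * (x' * y + x * y') - (x + y) * (x'' * y - x * y''))
      = 2 * H * (x' - y') * s * (x + y - 2 * z) := by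
  linear_combination (-(x + y)) * h₁ + (x + y) * h₂ + (x' - y') * h₀
    - 4 * H * (x' - y') * s * hs

theorem cubic_eq_zero_of_mul_add_eq {p q h d a z s : R}
    (hpq : p * z + q = 2 * h * d * s * (a - 2 * z)) (hs : s ^ 2 = a + z) :
    16 * h ^ 2 * d ^ 2 * z ^ 3 + -p ^ 2 * z ^ 2 + (-12 * h ^ 2 * a ^ 2 * d ^ 2 - 2 * p * q) * z
        + (4 * h ^ 2 * a ^ 3 * d ^ 2 - q ^ 2) = 0 := by
  linear_combination (-(p * z + q + 2 * h * d * s * (a - 2 * z))) * hpq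
    - 4 * h ^ 2 * d ^ 2 * (a - 2 * z) ^ 2 * hs

end Algebra

theorem stmt_11_general (aI bI aJ bJ aK bK H : ℝ) (X Y Z : ℝ → ℝ)
    (P Q L M N R : ℝ → ℝ → ℝ)
    (hX : ContDiffOn ℝ 2 X (Set.Ioo aI bI))
    (hY : ContDiffOn ℝ 2 Y (Set.Ioo aJ bJ))
    (hZ : ContDiffOn ℝ 2 Z (Set.Ioo aK bK))
    (hpos : ∀ u ∈ Set.Ioo aI bI, ∀ v ∈ Set.Ioo aJ bJ, ∀ w ∈ Set.Ioo aK bK,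
      u + v + w = 0 → X u + Y v + Z w > 0)
    (heq : ∀ u ∈ Set.Ioo aI bI, ∀ v ∈ Set.Ioo aJ bJ, ∀ w ∈ Set.Ioo aK bK,
      u + v + w = 0 →
      (X u + Y v) * deriv Z w + (deriv X u + deriv Y v) * Z w
          + deriv X u * Y v + X u * deriv Y v
        = -4 * H * (X u + Y v + Z w) ^ ((3 : ℝ) / 2))
    (hP : ∀ u ∈ Set.Ioo aI bI, ∀ v ∈ Set.Ioo aJ bJ,
      P u v = (deriv X u) ^ 2 - (deriv Y v) ^ 2
        - (X u + Y v) * (deriv (deriv X) u - deriv (deriv Y) v))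
    (hQ : ∀ u ∈ Set.Ioo aI bI, ∀ v ∈ Set.Ioo aJ bJ,
      Q u v = (deriv X u - deriv Y v) * (deriv X u * Y v + X u * deriv Y v)
        - (X u + Y v) * (deriv (deriv X) u * Y v - X u * deriv (deriv Y) v))
    (hL : ∀ u ∈ Set.Ioo aI bI, ∀ v ∈ Set.Ioo aJ bJ,
      L u v = 16 * H ^ 2 * (deriv X u - deriv Y v) ^ 2)
    (hM : ∀ u ∈ Set.Ioo aI bI, ∀ v ∈ Set.Ioo aJ bJ,
      M u v = -(P u v) ^ 2)
    (hN : ∀ u ∈ Set.Ioo aI bI, ∀ v ∈ Set.Ioo aJ bJ,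
      N u v = -12 * H ^ 2 * (X u + Y v) ^ 2 * (deriv X u - deriv Y v) ^ 2
        - 2 * P u v * Q u v)
    (hR : ∀ u ∈ Set.Ioo aI bI, ∀ v ∈ Set.Ioo aJ bJ,
      R u v = 4 * H ^ 2 * (X u + Y v) ^ 3 * (deriv X u - deriv Y v) ^ 2 - (Q u v) ^ 2) :
    ∀ u ∈ Set.Ioo aI bI, ∀ v ∈ Set.Ioo aJ bJ, ∀ w ∈ Set.Ioo aK bK,
      u + v + w = 0 →
      L u v * Z w ^ 3 + M u v * Z w ^ 2 + N u v * Z w + R u v = 0 := by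
  intro u hu v hv w hw huvw
  have hS := (hpos u hu v hv w hw huvw).le
  have h₀ := heq u hu v hv w hw huvw
  rw [Real.rpow_three_halves hS] at h₀
  have h₁ := cmc_identity_deriv (c := -v) isOpen_Ioo isOpen_Ioo hX hZ
    (fun u' hu' w' hw' h => heq u' hu' v hv w' hw' (by linarith)) hu hw (by linarith)
  have h₂ := cmc_identity_deriv (c := -u) (H := H) isOpen_Ioo isOpen_Ioo hY hZ
    (fun v' hv' w' hw' h => by
      rw [add_comm (Y v') (X u), add_comm (deriv Y v') (deriv X u)]
      linear_combination heq u hu v' hv' w' hw' (by linarith)) hv hw (by linarith)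
  rw [show Y v + X u + Z w = X u + Y v + Z w by ring] at h₂
  have hs := Real.sq_sqrt hS
  have hPQ : P u v * Z w + Q u v
      = 2 * H * (deriv X u - deriv Y v) * √(X u + Y v + Z w) * (X u + Y v - 2 * Z w) := by
    rw [hP u hu v hv, hQ u hu v hv]
    exact linear_relation_of_cmc_derivs h₀ h₁ h₂ hs
  rw [hL u hu v hv, hM u hu v hv, hN u hu v hv, hR u hu v hv]
  exact cubic_eq_zero_of_mul_add_eq hPQ hs

/-- Squaring the identity `PZ + Q = 2H(X'−Y')(X+Y−2Z)(X+Y+Z)^{1/2}` yields the cubic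
`LZ³ + MZ² + NZ + R = 0` with `L = 16H²(X'−Y')²`, `M = −P²`,
`N = −12H²(X+Y)²(X'−Y')² − 2PQ`, `R = 4H²(X+Y)³(X'−Y')² − Q²`. -/
theorem stmt_11 (aI bI aJ bJ aK bK H : ℝ) (X Y Z : ℝ → ℝ)
    (P Q L M N R : ℝ → ℝ → ℝ)
    (hX : ContDiffOn ℝ 2 X (Set.Ioo aI bI))
    (hY : ContDiffOn ℝ 2 Y (Set.Ioo aJ bJ))
    (hZ : ContDiffOn ℝ 2 Z (Set.Ioo aK bK))
    (hpos : ∀ u ∈ Set.Ioo aI bI, ∀ v ∈ Set.Ioo aJ bJ, ∀ w ∈ Set.Ioo aK bK,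
      u + v + w = 0 → X u + Y v + Z w > 0)
    (heq : ∀ u ∈ Set.Ioo aI bI, ∀ v ∈ Set.Ioo aJ bJ, ∀ w ∈ Set.Ioo aK bK,
      u + v + w = 0 →
      (X u + Y v) * deriv Z w + (deriv X u + deriv Y v) * Z w
          + deriv X u * Y v + X u * deriv Y v
        = -4 * H * (X u + Y v + Z w) ^ ((3 : ℝ) / 2))
    (hne : ∀ u ∈ Set.Ioo aI bI, ∀ v ∈ Set.Ioo aJ bJ, ∀ w ∈ Set.Ioo aK bK,
      u + v + w = 0 → X u + Y v ≠ 0)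
    (hP : ∀ u ∈ Set.Ioo aI bI, ∀ v ∈ Set.Ioo aJ bJ,
      P u v = (deriv X u) ^ 2 - (deriv Y v) ^ 2
        - (X u + Y v) * (deriv (deriv X) u - deriv (deriv Y) v))
    (hQ : ∀ u ∈ Set.Ioo aI bI, ∀ v ∈ Set.Ioo aJ bJ,
      Q u v = (deriv X u - deriv Y v) * (deriv X u * Y v + X u * deriv Y v)
        - (X u + Y v) * (deriv (deriv X) u * Y v - X u * deriv (deriv Y) v))
    (hL : ∀ u ∈ Set.Ioo aI bI, ∀ v ∈ Set.Ioo aJ bJ,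
      L u v = 16 * H ^ 2 * (deriv X u - deriv Y v) ^ 2)
    (hM : ∀ u ∈ Set.Ioo aI bI, ∀ v ∈ Set.Ioo aJ bJ,
      M u v = -(P u v) ^ 2)
    (hN : ∀ u ∈ Set.Ioo aI bI, ∀ v ∈ Set.Ioo aJ bJ,
      N u v = -12 * H ^ 2 * (X u + Y v) ^ 2 * (deriv X u - deriv Y v) ^ 2
        - 2 * P u v * Q u v)
    (hR : ∀ u ∈ Set.Ioo aI bI, ∀ v ∈ Set.Ioo aJ bJ,
      R u v = 4 * H ^ 2 * (X u + Y v) ^ 3 * (deriv X u - deriv Y v) ^ 2 - (Q u v) ^ 2) :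
    ∀ u ∈ Set.Ioo aI bI, ∀ v ∈ Set.Ioo aJ bJ, ∀ w ∈ Set.Ioo aK bK,
      u + v + w = 0 →
      L u v * Z w ^ 3 + M u v * Z w ^ 2 + N u v * Z w + R u v = 0 :=
  stmt_11_general aI bI aJ bJ aK bK H X Y Z P Q L M N R hX hY hZ hpos heq hP hQ hL hM hN hR
end

section
/- Let H ≠ 0, let I, J ⊆ ℝ be open intervals, and let X : I → ℝ, Y : J → ℝ be three times differentiable functions such that 24H²(X'(u) − Y'(v)) = (X'(u) + Y'(v))(X''(u) − Y''(v)) for all u ∈ I, v ∈ J, and X'(u) − Y'(v) ≠ 0 for all u ∈ I, v ∈ J. Then X''(u)·Y''(v) = 0 for all u ∈ I, v ∈ J. -/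
/-- If `H ≠ 0`, `X`, `Y` are three times differentiable on open intervals with
`24H²(X'−Y') = (X'+Y')(X''−Y'')` and `X'(u) ≠ Y'(v)` everywhere, then `X''Y'' = 0`. -/
theorem stmt_14 (aI bI aJ bJ H : ℝ) (hH : H ≠ 0) (X Y : ℝ → ℝ)
    (hX1 : ∀ u ∈ Set.Ioo aI bI, DifferentiableAt ℝ X u)
    (hX2 : ∀ u ∈ Set.Ioo aI bI, DifferentiableAt ℝ (deriv X) u)
    (hX3 : ∀ u ∈ Set.Ioo aI bI, DifferentiableAt ℝ (deriv (deriv X)) u)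
    (hY1 : ∀ v ∈ Set.Ioo aJ bJ, DifferentiableAt ℝ Y v)
    (hY2 : ∀ v ∈ Set.Ioo aJ bJ, DifferentiableAt ℝ (deriv Y) v)
    (hY3 : ∀ v ∈ Set.Ioo aJ bJ, DifferentiableAt ℝ (deriv (deriv Y)) v)
    (heq : ∀ u ∈ Set.Ioo aI bI, ∀ v ∈ Set.Ioo aJ bJ,
      24 * H ^ 2 * (deriv X u - deriv Y v)
        = (deriv X u + deriv Y v) * (deriv (deriv X) u - deriv (deriv Y) v))
    (hne : ∀ u ∈ Set.Ioo aI bI, ∀ v ∈ Set.Ioo aJ bJ, deriv X u - deriv Y v ≠ 0) :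
    ∀ u ∈ Set.Ioo aI bI, ∀ v ∈ Set.Ioo aJ bJ,
      deriv (deriv X) u * deriv (deriv Y) v = 0 := by
  -- (EA): differentiate the identity in u
  have hEA : ∀ u ∈ Set.Ioo aI bI, ∀ v ∈ Set.Ioo aJ bJ,
      24 * H ^ 2 * deriv (deriv X) u
        = deriv (deriv X) u * (deriv (deriv X) u - deriv (deriv Y) v)
          + (deriv X u + deriv Y v) * deriv (deriv (deriv X)) u := by
    intro u hu v hv
    have hev : (fun w => 24 * H ^ 2 * (deriv X w - deriv Y v)) =ᶠ[nhds u]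
        (fun w => (deriv X w + deriv Y v) * (deriv (deriv X) w - deriv (deriv Y) v)) :=
      Filter.eventually_of_mem (isOpen_Ioo.mem_nhds hu) (fun x hx => heq x hx v hv)
    have hL : HasDerivAt (fun w => 24 * H ^ 2 * (deriv X w - deriv Y v))
        (24 * H ^ 2 * deriv (deriv X) u) u :=
      (((hX2 u hu).hasDerivAt).sub_const _).const_mul _
    have hR : HasDerivAt (fun w => (deriv X w + deriv Y v) * (deriv (deriv X) w - deriv (deriv Y) v))
        (deriv (deriv X) u * (deriv (deriv X) u - deriv (deriv Y) v)
          + (deriv X u + deriv Y v) * deriv (deriv (deriv X)) u) u :=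
      (((hX2 u hu).hasDerivAt).add_const _).mul (((hX3 u hu).hasDerivAt).sub_const _)
    exact hL.unique (hR.congr_of_eventuallyEq hev)
  -- (EB): differentiate the identity in v
  have hEB : ∀ u ∈ Set.Ioo aI bI, ∀ v ∈ Set.Ioo aJ bJ,
      24 * H ^ 2 * (-(deriv (deriv Y) v))
        = deriv (deriv Y) v * (deriv (deriv X) u - deriv (deriv Y) v)
          + (deriv X u + deriv Y v) * (-(deriv (deriv (deriv Y)) v)) := by
    intro u hu v hv
    have hev : (fun w => 24 * H ^ 2 * (deriv X u - deriv Y w)) =ᶠ[nhds v]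
        (fun w => (deriv X u + deriv Y w) * (deriv (deriv X) u - deriv (deriv Y) w)) :=
      Filter.eventually_of_mem (isOpen_Ioo.mem_nhds hv) (fun x hx => heq u hu x hx)
    have hL : HasDerivAt (fun w => 24 * H ^ 2 * (deriv X u - deriv Y w))
        (24 * H ^ 2 * (-(deriv (deriv Y) v))) v :=
      (((hY2 v hv).hasDerivAt).const_sub _).const_mul _
    have hR : HasDerivAt (fun w => (deriv X u + deriv Y w) * (deriv (deriv X) u - deriv (deriv Y) w))
        (deriv (deriv Y) v * (deriv (deriv X) u - deriv (deriv Y) v)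
          + (deriv X u + deriv Y v) * (-(deriv (deriv (deriv Y)) v))) v :=
      (((hY2 v hv).hasDerivAt).const_add _).mul (((hY3 v hv).hasDerivAt).const_sub _)
    exact hL.unique (hR.congr_of_eventuallyEq hev)
  -- (EC): differentiate (EA) in v
  have hEC : ∀ u ∈ Set.Ioo aI bI, ∀ v ∈ Set.Ioo aJ bJ,
      (0 : ℝ) = deriv (deriv X) u * (-(deriv (deriv (deriv Y)) v))
        + deriv (deriv Y) v * deriv (deriv (deriv X)) u := by
    intro u hu v hv
    have hev : (fun _ : ℝ => 24 * H ^ 2 * deriv (deriv X) u) =ᶠ[nhds v]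
        (fun w => deriv (deriv X) u * (deriv (deriv X) u - deriv (deriv Y) w)
          + (deriv X u + deriv Y w) * deriv (deriv (deriv X)) u) :=
      Filter.eventually_of_mem (isOpen_Ioo.mem_nhds hv) (fun x hx => hEA u hu x hx)
    have hL : HasDerivAt (fun _ : ℝ => 24 * H ^ 2 * deriv (deriv X) u) 0 v := hasDerivAt_const _ _
    have hR : HasDerivAt (fun w => deriv (deriv X) u * (deriv (deriv X) u - deriv (deriv Y) w)
          + (deriv X u + deriv Y w) * deriv (deriv (deriv X)) u)
        (deriv (deriv X) u * (-(deriv (deriv (deriv Y)) v))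
          + deriv (deriv Y) v * deriv (deriv (deriv X)) u) v :=
      ((((hY3 v hv).hasDerivAt).const_sub _).const_mul _).add
        ((((hY2 v hv).hasDerivAt).const_add _).mul_const _)
    exact hL.unique (hR.congr_of_eventuallyEq hev)
  -- combine
  intro u hu v hv
  have e0 := heq u hu v hv
  have ea := hEA u hu v hv
  have eb := hEB u hu v hv
  have ec := hEC u hu v hv
  have key : deriv (deriv X) u * deriv (deriv Y) v
      * (deriv (deriv X) u - deriv (deriv Y) v) = 0 := by
    linear_combination (-(deriv (deriv Y) v) / 2) * ea + (-(deriv (deriv X) u) / 2) * eb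
      + ((deriv X u + deriv Y v) / 2) * ec
  rcases mul_eq_zero.mp key with h | h
  · exact h
  · exfalso
    have hsub : deriv (deriv X) u - deriv (deriv Y) v = 0 := h
    rw [hsub, mul_zero] at e0
    have hc : (24 : ℝ) * H ^ 2 ≠ 0 := by positivity
    exact (mul_ne_zero hc (hne u hu v hv)) e0
end

section
/- Let H ≠ 0, let I, J ⊆ ℝ be open intervals, and let X : I → ℝ, Y : J → ℝ be three times differentiable functions such that 24H²(X'(u) − Y'(v)) = (X'(u) + Y'(v))(X''(u) − Y''(v)) and X'(u) + Y'(v) ≠ 0 for all u ∈ I, v ∈ J. Then 48H²·X''(u)·Y'(v) = X'''(u)·(X'(u) + Y'(v))² for all u ∈ I, v ∈ J. -/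
/-- Differentiating `24H²(X'−Y')/(X'+Y') = X''−Y''` with respect to `u` gives
`48H²X''Y' = X'''(X'+Y')²`. -/
theorem stmt_15 (aI bI aJ bJ H : ℝ) (hH : H ≠ 0) (X Y : ℝ → ℝ)
    (hX1 : ∀ u ∈ Set.Ioo aI bI, DifferentiableAt ℝ X u)
    (hX2 : ∀ u ∈ Set.Ioo aI bI, DifferentiableAt ℝ (deriv X) u)
    (hX3 : ∀ u ∈ Set.Ioo aI bI, DifferentiableAt ℝ (deriv (deriv X)) u)
    (hY1 : ∀ v ∈ Set.Ioo aJ bJ, DifferentiableAt ℝ Y v)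
    (hY2 : ∀ v ∈ Set.Ioo aJ bJ, DifferentiableAt ℝ (deriv Y) v)
    (hY3 : ∀ v ∈ Set.Ioo aJ bJ, DifferentiableAt ℝ (deriv (deriv Y)) v)
    (heq : ∀ u ∈ Set.Ioo aI bI, ∀ v ∈ Set.Ioo aJ bJ,
      24 * H ^ 2 * (deriv X u - deriv Y v)
        = (deriv X u + deriv Y v) * (deriv (deriv X) u - deriv (deriv Y) v))
    (hne : ∀ u ∈ Set.Ioo aI bI, ∀ v ∈ Set.Ioo aJ bJ, deriv X u + deriv Y v ≠ 0) :
    ∀ u ∈ Set.Ioo aI bI, ∀ v ∈ Set.Ioo aJ bJ,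
      48 * H ^ 2 * deriv (deriv X) u * deriv Y v
        = deriv (deriv (deriv X)) u * (deriv X u + deriv Y v) ^ 2 := by
  intro u hu v hv
  set g : ℝ → ℝ := fun w => 24 * H ^ 2 * (deriv X w - deriv Y v)
      - (deriv X w + deriv Y v) * (deriv (deriv X) w - deriv (deriv Y) v) with hg
  have hX2' := (hX2 u hu).hasDerivAt
  have hX3' := (hX3 u hu).hasDerivAt
  have hd : HasDerivAt g
      (24 * H ^ 2 * (deriv (deriv X) u)
        - ((deriv (deriv X) u) * (deriv (deriv X) u - deriv (deriv Y) v)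
          + (deriv X u + deriv Y v) * (deriv (deriv (deriv X)) u))) u := by
    have h1 : HasDerivAt (fun w => deriv X w - deriv Y v) (deriv (deriv X) u) u :=
      hX2'.sub_const _
    have h2 : HasDerivAt (fun w => deriv X w + deriv Y v) (deriv (deriv X) u) u :=
      hX2'.add_const _
    have h3 : HasDerivAt (fun w => deriv (deriv X) w - deriv (deriv Y) v)
        (deriv (deriv (deriv X)) u) u := hX3'.sub_const _
    exact (h1.const_mul _).sub (h2.mul h3)
  have hzero : deriv g u = 0 := by
    have hev : g =ᶠ[nhds u] (fun _ => (0:ℝ)) := by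
      filter_upwards [isOpen_Ioo.mem_nhds hu] with x hx
      have := heq x hx v hv
      simp only [hg]
      linarith
    rw [hev.deriv_eq]
    simp
  have hD := hd.deriv
  rw [hzero] at hD
  have h0 := heq u hu v hv
  linear_combination -(deriv X u + deriv Y v) * hD - deriv (deriv X) u * h0
end

section
/- Let f(x) = log(sinh x), g(y) = log(sinh y) for x, y > 0 and h(z) = −log(sin z) for z ∈ (0, π). Then at every point (x, y, z) with x > 0, y > 0, z ∈ (0, π) and sinh(x)·sinh(y) = sin(z) (equivalently f(x) + g(y) + h(z) = 0), the minimal separable surface equation holds: f''(x)(g'(y)² + h'(z)²) + g''(y)(f'(x)² + h'(z)²) + h''(z)(f'(x)² + g'(y)²) = 0. -/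
/-! With `f = log ∘ sinh` and `h = -log ∘ sin` one has `f' = coth`, `f'' = -1/sinh²`,
`h' = -cot`, `h'' = 1/sin²`, and `coth² = 1 + 1/sinh²`, `cot² = 1/sin² - 1`. In terms of
`u = 1/sinh² x`, `v = 1/sinh² y`, `w = 1/sin² z` the minimal surface expression becomes
`2 (w - u v)`, which vanishes on the surface `sin z = sinh x sinh y`. -/

open Real Set

namespace Scherk

variable {t : ℝ}

lemma deriv_log_sinh (ht : 0 < t) :
    deriv (fun t => log (sinh t)) t = cosh t / sinh t :=
  ((hasDerivAt_sinh t).log (sinh_pos_iff.2 ht).ne').deriv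

lemma deriv_deriv_log_sinh (ht : 0 < t) :
    deriv (deriv fun t => log (sinh t)) t = -(sinh t ^ 2)⁻¹ := by
  have hderiv : deriv (fun t => log (sinh t)) =ᶠ[nhds t] fun t => cosh t / sinh t := by
    filter_upwards [isOpen_Ioi.mem_nhds ht] with s hs using deriv_log_sinh hs
  rw [hderiv.deriv_eq, ((hasDerivAt_cosh t).fun_div (hasDerivAt_sinh t)
    (sinh_pos_iff.2 ht).ne').deriv]
  field_simp
  linear_combination -cosh_sq_sub_sinh_sq t

lemma deriv_neg_log_sin (ht : t ∈ Ioo 0 π) :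
    deriv (fun t => -log (sin t)) t = -(cos t / sin t) :=
  ((hasDerivAt_sin t).log (sin_pos_of_pos_of_lt_pi ht.1 ht.2).ne').neg.deriv

lemma deriv_deriv_neg_log_sin (ht : t ∈ Ioo 0 π) :
    deriv (deriv fun t => -log (sin t)) t = (sin t ^ 2)⁻¹ := by
  have hsin : sin t ≠ 0 := (sin_pos_of_pos_of_lt_pi ht.1 ht.2).ne'
  have hderiv : deriv (fun t => -log (sin t)) =ᶠ[nhds t] fun t => -(cos t / sin t) := by
    filter_upwards [isOpen_Ioo.mem_nhds ht] with s hs using deriv_neg_log_sin hs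
  rw [hderiv.deriv_eq, ((hasDerivAt_cos t).fun_div (hasDerivAt_sin t) hsin).fun_neg.deriv]
  field_simp
  linear_combination sin_sq_add_cos_sq t

lemma cosh_div_sinh_sq (ht : sinh t ≠ 0) : (cosh t / sinh t) ^ 2 = 1 + (sinh t ^ 2)⁻¹ := by
  field_simp
  linarith [cosh_sq_sub_sinh_sq t]

lemma cos_div_sin_sq (ht : sin t ≠ 0) : (cos t / sin t) ^ 2 = (sin t ^ 2)⁻¹ - 1 := by
  field_simp
  linarith [sin_sq_add_cos_sq t]

lemma minimal_expr_eq_zero {u v w : ℝ} (hw : w = u * v) :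
    -u * ((1 + v) + (w - 1)) + -v * ((1 + u) + (w - 1)) + w * ((1 + u) + (1 + v)) = 0 := by
  subst hw
  ring

end Scherk

open Scherk in
/-- Scherk's surface `sin(z) = sinh(x)sinh(y)`: with `f(x) = log(sinh x)`,
`g(y) = log(sinh y)`, `h(z) = −log(sin z)`, the minimal separable surface equation
`f''(g'² + h'²) + g''(f'² + h'²) + h''(f'² + g'²) = 0` holds at points of the surface. -/
theorem stmt_17 :
    ∀ x y z : ℝ, 0 < x → 0 < y → z ∈ Set.Ioo 0 Real.pi →
      Real.sinh x * Real.sinh y = Real.sin z →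
      deriv (deriv (fun t => Real.log (Real.sinh t))) x
          * ((deriv (fun t => Real.log (Real.sinh t)) y) ^ 2
            + (deriv (fun t => -Real.log (Real.sin t)) z) ^ 2)
        + deriv (deriv (fun t => Real.log (Real.sinh t))) y
          * ((deriv (fun t => Real.log (Real.sinh t)) x) ^ 2
            + (deriv (fun t => -Real.log (Real.sin t)) z) ^ 2)
        + deriv (deriv (fun t => -Real.log (Real.sin t))) z
          * ((deriv (fun t => Real.log (Real.sinh t)) x) ^ 2
            + (deriv (fun t => Real.log (Real.sinh t)) y) ^ 2) = 0 := by
  intro x y z hx hy hz hsurf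
  rw [deriv_log_sinh hx, deriv_log_sinh hy, deriv_deriv_log_sinh hx, deriv_deriv_log_sinh hy,
    deriv_neg_log_sin hz, deriv_deriv_neg_log_sin hz, neg_sq,
    cosh_div_sinh_sq (sinh_pos_iff.2 hx).ne', cosh_div_sinh_sq (sinh_pos_iff.2 hy).ne',
    cos_div_sin_sq (sin_pos_of_pos_of_lt_pi hz.1 hz.2).ne']
  exact minimal_expr_eq_zero (by rw [← hsurf, mul_pow, mul_inv])
end
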